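/- Let ε > 0 and set c(ε) = (2π²ε)^{−2/3}. The maximal solution (α, β) of the system (case aμ = −1) with initial conditions α(0) = √(c(ε))·ε and β(0) = √(c(ε)) is defined on all of [0, ∞), and α(t) → (2π²)^{−1/3} and β(t) → (2π²)^{−1/3} as t → ∞. (This is the ODE content of Theorem 2 in the case aμ = −1: for every fiber length ε > 0 the volume-normalized Berger metric flows back to the volume-normalized round metric on S³.) -/

import Mathlib

open Real Filter Set Topology
open scoped ENNReal

/-- The vector field of the volume-normalized spinor-flow system on Berger spheres
in the case `aμ = -1`. -/
noncomputable def G2 (x y : ℝ) : ℝ × ℝ :=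
  (-(1/4) * x^3 / y^4 + (1/12) * x / y^2 + (1/6) * (1/x),
   (1/8) * x^2 / y^3 - (1/12) * y / x^2 - (1/24) * (1/y))
/-- `(α, β)` is a solution of the normalized system (case `aμ = -1`) on `J`. -/
def IsSolutionOn (α β : ℝ → ℝ) (J : Set ℝ) : Prop :=
  ∀ t ∈ J, α t ≠ 0 ∧ β t ≠ 0 ∧
    HasDerivAt α (G2 (α t) (β t)).1 t ∧
    HasDerivAt β (G2 (α t) (β t)).2 t

/-- The interval `[0, T)` as a subset of `ℝ`, where `T ∈ (0,∞]`. -/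
def domainUpTo (T : ℝ≥0∞) : Set ℝ := {t : ℝ | 0 ≤ t ∧ ENNReal.ofReal t < T}

/-- `(α, β)` is a maximal solution on `[0, T)`: it is a solution there and cannot be
extended to a solution on a strictly larger interval to the right. -/
def IsMaxSolution (α β : ℝ → ℝ) (T : ℝ≥0∞) : Prop :=
  0 < T ∧ IsSolutionOn α β (domainUpTo T) ∧
    ¬ ∃ (T' : ℝ≥0∞) (α' β' : ℝ → ℝ), T < T' ∧ IsSolutionOn α' β' (domainUpTo T') ∧
        ∀ t ∈ domainUpTo T, α' t = α t ∧ β' t = β t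


/-!
The product `v = αβ²` (the volume) is conserved, and the deviation `h = α³ - v` satisfies the
linear equation `h' = -k h` with `k = α (3α³ + 2v) / (4v²) > 0`. Hence `h` keeps its sign: `α`
moves monotonically from `α 0` towards `r = v^(1/3)` without crossing it, and `β = √(v / α)`.
On a bounded maximal interval the solution would thus converge at the right endpoint to a point
of the open quadrant, where the local existence theorem continues it, contradicting maximality.
On `[0, ∞)` the rate `k` is bounded below, so `h → 0` exponentially and `α, β → r`. For the
initial data of the theorem, `v = 1 / (2π²)`.
-/

theorem IsPreconnected.pos_of_forall_ne_zero {X : Type*} [TopologicalSpace X] {s : Set X}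
    (hs : IsPreconnected s) {f : X → ℝ} (hf : ContinuousOn f s) (hne : ∀ x ∈ s, f x ≠ 0)
    {a b : X} (ha : a ∈ s) (hb : b ∈ s) (hfa : 0 < f a) : 0 < f b := by
  by_contra! hfb
  obtain ⟨x, hx, hfx⟩ := hs.intermediate_value₂ hb ha hf continuousOn_const hfb hfa.le
  exact hne x hx hfx

theorem hasDerivAt_prodMk_iff {E F : Type*} [NormedAddCommGroup E] [NormedSpace ℝ E]
    [NormedAddCommGroup F] [NormedSpace ℝ F] {f₁ : ℝ → E} {f₂ : ℝ → F} {p : E × F} {t : ℝ} :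
    HasDerivAt (fun s => (f₁ s, f₂ s)) p t ↔ HasDerivAt f₁ p.1 t ∧ HasDerivAt f₂ p.2 t :=
  ⟨fun h => ⟨(ContinuousLinearMap.fst ℝ E F).hasFDerivAt.comp_hasDerivAt t h,
    (ContinuousLinearMap.snd ℝ E F).hasFDerivAt.comp_hasDerivAt t h⟩, fun h => h.1.prodMk h.2⟩

theorem eqOn_zero_of_hasDerivAt_eq_mul {f c : ℝ → ℝ} {a b t₀ : ℝ} (hc : ContinuousOn c (Icc a b))
    (hf : ∀ t ∈ Icc a b, HasDerivAt f (c t * f t) t) (ht₀ : t₀ ∈ Icc a b) (hft₀ : f t₀ = 0) :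
    EqOn f 0 (Icc a b) := by
  obtain ⟨C, hC⟩ := isCompact_Icc.exists_bound_of_continuousOn hc
  have hlip : ∀ t ∈ Icc a b, LipschitzOnWith C.toNNReal (fun x => c t * x) univ := fun t ht =>
    ((lipschitzWith_smul (c t)).weaken (by
      rw [← NNReal.coe_le_coe, coe_nnnorm, Real.coe_toNNReal']
      exact (hC t ht).trans (le_max_left _ _))).lipschitzOnWith
  have hcont : ContinuousOn f (Icc a b) := fun t ht => (hf t ht).continuousAt.continuousWithinAt
  have hzero : ∀ t, HasDerivAt (0 : ℝ → ℝ) (c t * (0 : ℝ → ℝ) t) t := fun t => by simp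
  have hleft : EqOn f 0 (Icc a t₀) :=
    ODE_solution_unique_of_mem_Icc_left (v := fun t x => c t * x) (s := fun _ => univ)
      (fun t ht => hlip t ⟨ht.1.le, ht.2.trans ht₀.2⟩)
      (hcont.mono (Icc_subset_Icc_right ht₀.2))
      (fun t ht => (hf t ⟨ht.1.le, ht.2.trans ht₀.2⟩).hasDerivWithinAt) (fun _ _ => trivial)
      continuousOn_const (fun t _ => (hzero t).hasDerivWithinAt) (fun _ _ => trivial) hft₀
  have hright : EqOn f 0 (Icc t₀ b) :=
    ODE_solution_unique_of_mem_Icc_right (v := fun t x => c t * x) (s := fun _ => univ)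
      (fun t ht => hlip t ⟨ht₀.1.trans ht.1, ht.2.le⟩)
      (hcont.mono (Icc_subset_Icc_left ht₀.1))
      (fun t ht => (hf t ⟨ht₀.1.trans ht.1, ht.2.le⟩).hasDerivWithinAt) (fun _ _ => trivial)
      continuousOn_const (fun t _ => (hzero t).hasDerivWithinAt) (fun _ _ => trivial) hft₀
  intro t ht
  rcases le_total t t₀ with htt₀ | htt₀
  · exact hleft ⟨ht.1, htt₀⟩
  · exact hright ⟨htt₀, ht.2⟩

theorem nonneg_of_hasDerivAt_eq_mul {f c : ℝ → ℝ} {a b : ℝ} (hab : a ≤ b)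
    (hc : ContinuousOn c (Icc a b)) (hf : ∀ t ∈ Icc a b, HasDerivAt f (c t * f t) t)
    (ha : 0 ≤ f a) : 0 ≤ f b := by
  have hzero : ∀ t₀ ∈ Icc a b, f t₀ = 0 → EqOn f 0 (Icc a b) :=
    fun _ ht₀ => eqOn_zero_of_hasDerivAt_eq_mul hc hf ht₀
  rcases ha.eq_or_lt with ha | ha
  · exact (hzero a (left_mem_Icc.2 hab) ha.symm (right_mem_Icc.2 hab)).ge
  · refine (isPreconnected_Icc.pos_of_forall_ne_zero
      (fun t ht => (hf t ht).continuousAt.continuousWithinAt) (fun t ht hft => ?_)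
      (left_mem_Icc.2 hab) (right_mem_Icc.2 hab) ha).le
    exact ha.ne' (hzero t ht hft (left_mem_Icc.2 hab))

theorem tendsto_zero_of_hasDerivAt_le_neg_mul {f f' : ℝ → ℝ} {c : ℝ} (hc : 0 < c)
    (hf : ∀ t ∈ Ici (0 : ℝ), HasDerivAt f (f' t) t) (hf' : ∀ t ∈ Ici (0 : ℝ), f' t ≤ -c * f t)
    (hf₀ : ∀ t ∈ Ici (0 : ℝ), 0 ≤ f t) : Tendsto f atTop (𝓝 0) := by
  have hexp : ∀ t, HasDerivAt (fun t => exp (c * t)) (exp (c * t) * c) t := fun t => by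
    simpa using ((hasDerivAt_id t).const_mul c).exp
  have hanti : AntitoneOn (fun t => f t * exp (c * t)) (Ici 0) := by
    refine antitoneOn_of_hasDerivWithinAt_nonpos (convex_Ici 0)
      (fun t ht => ((hf t ht).fun_mul (hexp t)).continuousAt.continuousWithinAt)
      (fun t ht => ((hf t (interior_subset ht)).fun_mul (hexp t)).hasDerivWithinAt)
      (fun t ht => ?_)
    have := hf' t (interior_subset ht)
    nlinarith [exp_pos (c * t)]
  have hbound : ∀ t ∈ Ici (0 : ℝ), f t ≤ f 0 * exp (-(c * t)) := fun t ht => by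
    have : f t * exp (c * t) ≤ f 0 * exp (c * 0) := hanti self_mem_Ici ht ht
    rw [mul_zero, exp_zero, mul_one] at this
    rwa [exp_neg, ← div_eq_mul_inv, le_div_iff₀ (exp_pos _)]
  refine squeeze_zero' (eventually_atTop.2 ⟨0, hf₀⟩) (eventually_atTop.2 ⟨0, hbound⟩) ?_
  simpa using (tendsto_exp_neg_atTop_nhds_zero.comp
    (tendsto_id.const_mul_atTop hc)).const_mul (f 0)

theorem exists_hasDerivAt_extension_of_tendsto {E : Type*} [NormedAddCommGroup E]
    [NormedSpace ℝ E] [CompleteSpace E] {V : E → E} {f : ℝ → E} {a b : ℝ} {p : E} {U : Set E}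
    (hab : a < b) (hV : ContDiffAt ℝ 1 V p) (hU : U ∈ 𝓝 p)
    (hf : ∀ t ∈ Ioo a b, HasDerivAt f (V (f t)) t) (hlim : Tendsto f (𝓝[<] b) (𝓝 p)) :
    ∃ c > b, ∃ g : ℝ → E, (∀ t < b, g t = f t) ∧
      ∀ t ∈ Ico b c, HasDerivAt g (V (g t)) t ∧ g t ∈ U := by
  obtain ⟨γ, hγb, ε, hε, hγ⟩ :=
    hV.exists_forall_mem_closedBall_exists_eq_forall_mem_Ioo_hasDerivAt₀ b
  have hnear : γ ⁻¹' U ∩ Ioo (b - ε) (b + ε) ∈ 𝓝 b :=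
    inter_mem ((hγ b ⟨by linarith, by linarith⟩).continuousAt.preimage_mem_nhds (hγb ▸ hU))
      (Ioo_mem_nhds (by linarith) (by linarith))
  obtain ⟨l, c, ⟨hlb, hbc⟩, hsub⟩ := mem_nhds_iff_exists_Ioo_subset.1 hnear
  have hγ' : ∀ t ∈ Ico b c, HasDerivAt γ (V (γ t)) t ∧ γ t ∈ U := fun t ht =>
    have hmem := hsub ⟨hlb.trans_le ht.1, ht.2⟩
    ⟨hγ t hmem.2, hmem.1⟩
  set g : ℝ → E := fun t => if t < b then f t else γ t
  have hg_lt : ∀ t < b, g t = f t := fun t ht => if_pos ht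
  have hg_ge : ∀ t, b ≤ t → g t = γ t := fun t ht => if_neg (not_lt.2 ht)
  have hg_Ioo : ∀ t ∈ Ioo a b, HasDerivAt g (V (f t)) t := fun t ht =>
    (hf t ht).congr_of_eventuallyEq (eventually_of_mem (Iio_mem_nhds ht.2) hg_lt)
  have hleft : HasDerivWithinAt g (V p) (Iic b) b := by
    refine hasDerivWithinAt_Iic_of_tendsto_deriv (s := Ioo a b)
      (fun t ht => (hg_Ioo t ht).differentiableAt.differentiableWithinAt) ?_
      (Ioo_mem_nhdsLT hab) ?_
    · rw [ContinuousWithinAt, hg_ge b le_rfl, hγb]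
      exact (hlim.mono_left (nhdsWithin_mono _ Ioo_subset_Iio_self)).congr'
        (eventually_nhdsWithin_of_forall fun t ht => (hg_lt t ht.2).symm)
    · exact (hV.continuousAt.tendsto.comp hlim).congr'
        (eventually_of_mem (Ioo_mem_nhdsLT hab) fun t ht => (hg_Ioo t ht).deriv.symm)
  have hright : HasDerivWithinAt g (V p) (Ici b) b := by
    rw [← hγb]
    exact (hγ' b ⟨le_rfl, hbc⟩).1.hasDerivWithinAt.congr (fun t ht => hg_ge t ht) (hg_ge b le_rfl)
  refine ⟨c, hbc, g, hg_lt, fun t ht => ?_⟩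
  rw [hg_ge t ht.1]
  refine ⟨?_, (hγ' t ht).2⟩
  rcases ht.1.eq_or_lt with rfl | hbt
  · rw [hγb, ← hasDerivWithinAt_univ, ← Iic_union_Ici]
    exact hleft.union hright
  · exact (hγ' t ht).1.congr_of_eventuallyEq
      (eventually_of_mem (Ioi_mem_nhds hbt) fun s hs => hg_ge s (le_of_lt hs))

theorem domainUpTo_of_ne_top {T : ℝ≥0∞} (hT : T ≠ ⊤) : domainUpTo T = Ico 0 T.toReal := by
  ext t
  exact and_congr_right fun ht => ENNReal.ofReal_lt_iff_lt_toReal ht hT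

theorem domainUpTo_top : domainUpTo ⊤ = Ici 0 := by
  ext t
  simp [domainUpTo]

theorem convex_domainUpTo (T : ℝ≥0∞) : Convex ℝ (domainUpTo T) := by
  rcases eq_or_ne T ⊤ with rfl | hT
  · simpa only [domainUpTo_top] using convex_Ici 0
  · simpa only [domainUpTo_of_ne_top hT] using convex_Ico 0 T.toReal

theorem Icc_subset_domainUpTo {T : ℝ≥0∞} {t : ℝ} (ht : t ∈ domainUpTo T) :
    Icc 0 t ⊆ domainUpTo T :=
  fun _ hs => ⟨hs.1, (ENNReal.ofReal_le_ofReal hs.2).trans_lt ht.2⟩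

/-- The rate `k` in `(α³ - v)' = -k (α³ - v)`, where `v = αβ²`. -/
noncomputable def relaxationRate (v x : ℝ) : ℝ := x * (3 * x ^ 3 + 2 * v) / (4 * v ^ 2)

theorem continuous_relaxationRate (v : ℝ) : Continuous (relaxationRate v) := by
  unfold relaxationRate
  fun_prop

theorem div_le_relaxationRate {v x : ℝ} (hv : 0 < v) (hx : 0 < x) :
    x / (2 * v) ≤ relaxationRate v x := by
  rw [relaxationRate, div_le_div_iff₀ (by positivity) (by positivity)]
  nlinarith [pow_pos hx 4, pow_pos hv 2]

theorem G2_fst_mul_sq_add_mul_G2_snd {x y : ℝ} (hx : x ≠ 0) (hy : y ≠ 0) :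
    (G2 x y).1 * y ^ 2 + x * (2 * y * (G2 x y).2) = 0 := by
  simp only [G2]
  field_simp
  ring

theorem three_mul_sq_mul_G2_fst {x y : ℝ} (hx : x ≠ 0) (hy : y ≠ 0) :
    3 * x ^ 2 * (G2 x y).1 = -relaxationRate (x * y ^ 2) x * (x ^ 3 - x * y ^ 2) := by
  simp only [G2, relaxationRate]
  field_simp
  ring

theorem G2_fst_nonpos {x y : ℝ} (hx : 0 < x) (hy : y ≠ 0) (hxy : x * y ^ 2 ≤ x ^ 3) :
    (G2 x y).1 ≤ 0 := by
  have hrate := div_le_relaxationRate (by positivity : 0 < x * y ^ 2) hx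
  have hpos : 0 < x / (2 * (x * y ^ 2)) := by positivity
  nlinarith [three_mul_sq_mul_G2_fst hx.ne' hy, pow_pos hx 2]

theorem G2_fst_nonneg {x y : ℝ} (hx : 0 < x) (hy : y ≠ 0) (hxy : x ^ 3 ≤ x * y ^ 2) :
    0 ≤ (G2 x y).1 := by
  have hrate := div_le_relaxationRate (by positivity : 0 < x * y ^ 2) hx
  have hpos : 0 < x / (2 * (x * y ^ 2)) := by positivity
  nlinarith [three_mul_sq_mul_G2_fst hx.ne' hy, pow_pos hx 2]

theorem contDiffAt_uncurry_G2 {p : ℝ × ℝ} (h₁ : p.1 ≠ 0) (h₂ : p.2 ≠ 0) :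
    ContDiffAt ℝ 1 (Function.uncurry G2) p := by
  unfold Function.uncurry G2
  fun_prop (disch := simp [*])

theorem isSolutionOn_iff_hasDerivAt {α β : ℝ → ℝ} {J : Set ℝ} :
    IsSolutionOn α β J ↔ ∀ t ∈ J, α t ≠ 0 ∧ β t ≠ 0 ∧
      HasDerivAt (fun s => (α s, β s)) (Function.uncurry G2 (α t, β t)) t := by
  simp only [IsSolutionOn, Function.uncurry_apply_pair, hasDerivAt_prodMk_iff]

namespace IsSolutionOn

variable {α β : ℝ → ℝ} {T : ℝ≥0∞}

theorem continuousOn_fst (hsol : IsSolutionOn α β (domainUpTo T)) :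
    ContinuousOn α (domainUpTo T) :=
  fun t ht => (hsol t ht).2.2.1.continuousAt.continuousWithinAt

theorem continuousOn_snd (hsol : IsSolutionOn α β (domainUpTo T)) :
    ContinuousOn β (domainUpTo T) :=
  fun t ht => (hsol t ht).2.2.2.continuousAt.continuousWithinAt

theorem fst_pos (hsol : IsSolutionOn α β (domainUpTo T)) (hα0 : 0 < α 0) {t : ℝ}
    (ht : t ∈ domainUpTo T) : 0 < α t :=
  (convex_domainUpTo T).isPreconnected.pos_of_forall_ne_zero hsol.continuousOn_fst
    (fun s hs => (hsol s hs).1) (Icc_subset_domainUpTo ht ⟨le_rfl, ht.1⟩) ht hα0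

theorem snd_pos (hsol : IsSolutionOn α β (domainUpTo T)) (hβ0 : 0 < β 0) {t : ℝ}
    (ht : t ∈ domainUpTo T) : 0 < β t :=
  (convex_domainUpTo T).isPreconnected.pos_of_forall_ne_zero hsol.continuousOn_snd
    (fun s hs => (hsol s hs).2.1) (Icc_subset_domainUpTo ht ⟨le_rfl, ht.1⟩) ht hβ0

theorem fst_mul_snd_sq (hsol : IsSolutionOn α β (domainUpTo T)) {t : ℝ}
    (ht : t ∈ domainUpTo T) : α t * β t ^ 2 = α 0 * β 0 ^ 2 := by
  have hderiv : ∀ s ∈ domainUpTo T, HasDerivAt (fun u => α u * β u ^ 2) 0 s := by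
    intro s hs
    obtain ⟨hα, hβ, hdα, hdβ⟩ := hsol s hs
    refine (hdα.fun_mul (hdβ.fun_pow 2)).congr_deriv ?_
    push_cast
    linear_combination G2_fst_mul_sq_add_mul_G2_snd hα hβ
  have hsub := Icc_subset_domainUpTo ht
  exact constant_of_has_deriv_right_zero
    (fun s hs => (hderiv s (hsub hs)).continuousAt.continuousWithinAt)
    (fun s hs => (hderiv s (hsub (Ico_subset_Icc_self hs))).hasDerivWithinAt) t ⟨ht.1, le_rfl⟩

theorem hasDerivAt_cube_sub (hsol : IsSolutionOn α β (domainUpTo T)) {t : ℝ}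
    (ht : t ∈ domainUpTo T) :
    HasDerivAt (fun s => α s ^ 3 - α 0 * β 0 ^ 2)
      (-relaxationRate (α 0 * β 0 ^ 2) (α t) * (α t ^ 3 - α 0 * β 0 ^ 2)) t := by
  obtain ⟨hα, hβ, hdα, -⟩ := hsol t ht
  rw [← hsol.fst_mul_snd_sq ht, ← three_mul_sq_mul_G2_fst hα hβ]
  refine ((hdα.fun_pow 3).sub_const (α t * β t ^ 2)).congr_deriv ?_
  push_cast
  ring

theorem monotoneOn_or_antitoneOn (hsol : IsSolutionOn α β (domainUpTo T)) (hα0 : 0 < α 0)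
    {r : ℝ} (hr : 0 < r) (hr3 : r ^ 3 = α 0 * β 0 ^ 2) :
    (MonotoneOn α (domainUpTo T) ∧ ∀ t ∈ domainUpTo T, α t ≤ r) ∨
      (AntitoneOn α (domainUpTo T) ∧ ∀ t ∈ domainUpTo T, r ≤ α t) := by
  set v := α 0 * β 0 ^ 2
  have hrate : ∀ t ∈ domainUpTo T,
      ContinuousOn (fun s => -relaxationRate v (α s)) (Icc 0 t) := fun t ht =>
    ((continuous_relaxationRate v).comp_continuousOn
      (hsol.continuousOn_fst.mono (Icc_subset_domainUpTo ht))).neg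
  have hdev : ∀ t ∈ domainUpTo T, ∀ s ∈ Icc 0 t,
      HasDerivAt (fun s => α s ^ 3 - v) (-relaxationRate v (α s) * (α s ^ 3 - v)) s :=
    fun t ht s hs => hsol.hasDerivAt_cube_sub (Icc_subset_domainUpTo ht hs)
  have hderiv : ∀ t ∈ interior (domainUpTo T),
      HasDerivWithinAt α (G2 (α t) (β t)).1 (interior (domainUpTo T)) t :=
    fun t ht => (hsol t (interior_subset ht)).2.2.1.hasDerivWithinAt
  rcases le_total (α 0 ^ 3) v with h0 | h0
  · have hle : ∀ t ∈ domainUpTo T, α t ^ 3 ≤ v := fun t ht => by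
      have := nonneg_of_hasDerivAt_eq_mul ht.1 (hrate t ht)
        (fun s hs => ((hdev t ht s hs).fun_neg).congr_deriv (mul_neg _ _).symm)
        (neg_nonneg.2 (sub_nonpos.2 h0))
      linarith
    refine Or.inl ⟨monotoneOn_of_hasDerivWithinAt_nonneg (convex_domainUpTo T)
      hsol.continuousOn_fst hderiv fun t ht => ?_, fun t ht => ?_⟩
    · have ht' := interior_subset ht
      exact G2_fst_nonneg (hsol.fst_pos hα0 ht') (hsol t ht').2.1
        ((hsol.fst_mul_snd_sq ht').symm ▸ hle t ht')
    · exact (pow_le_pow_iff_left₀ (hsol.fst_pos hα0 ht).le hr.le three_ne_zero).1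
        (hr3 ▸ hle t ht)
  · have hge : ∀ t ∈ domainUpTo T, v ≤ α t ^ 3 := fun t ht => by
      have := nonneg_of_hasDerivAt_eq_mul ht.1 (hrate t ht) (hdev t ht) (sub_nonneg.2 h0)
      linarith
    refine Or.inr ⟨antitoneOn_of_hasDerivWithinAt_nonpos (convex_domainUpTo T)
      hsol.continuousOn_fst hderiv fun t ht => ?_, fun t ht => ?_⟩
    · have ht' := interior_subset ht
      exact G2_fst_nonpos (hsol.fst_pos hα0 ht') (hsol t ht').2.1
        ((hsol.fst_mul_snd_sq ht').symm ▸ hge t ht')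
    · exact (pow_le_pow_iff_left₀ hr.le (hsol.fst_pos hα0 ht).le three_ne_zero).1
        (hr3 ▸ hge t ht)

theorem min_le_fst (hsol : IsSolutionOn α β (domainUpTo T)) (hα0 : 0 < α 0) {r : ℝ} (hr : 0 < r)
    (hr3 : r ^ 3 = α 0 * β 0 ^ 2) {t : ℝ} (ht : t ∈ domainUpTo T) : min (α 0) r ≤ α t := by
  rcases hsol.monotoneOn_or_antitoneOn hα0 hr hr3 with ⟨hmono, -⟩ | ⟨-, hge⟩
  · exact (min_le_left _ _).trans (hmono (Icc_subset_domainUpTo ht ⟨le_rfl, ht.1⟩) ht ht.1)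
  · exact (min_le_right _ _).trans (hge t ht)

theorem snd_eq_sqrt (hsol : IsSolutionOn α β (domainUpTo T)) (hβ0 : 0 < β 0) {t : ℝ}
    (ht : t ∈ domainUpTo T) : β t = √(α 0 * β 0 ^ 2 / α t) := by
  rw [← hsol.fst_mul_snd_sq ht, mul_div_cancel_left₀ _ (hsol t ht).1,
    sqrt_sq (hsol.snd_pos hβ0 ht).le]

theorem exists_tendsto_nhdsLT (hsol : IsSolutionOn α β (domainUpTo T)) (hT₀ : 0 < T)
    (hT : T ≠ ⊤) (hα0 : 0 < α 0) (hβ0 : 0 < β 0) :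
    ∃ p : ℝ × ℝ, 0 < p.1 ∧ 0 < p.2 ∧ Tendsto (fun t => (α t, β t)) (𝓝[<] T.toReal) (𝓝 p) := by
  set v := α 0 * β 0 ^ 2
  have hv : 0 < v := by positivity
  obtain ⟨r, hr, hr3⟩ : ∃ r > 0, r ^ 3 = v :=
    ⟨v ^ ((3 : ℕ)⁻¹ : ℝ), by positivity, rpow_inv_natCast_pow hv.le three_ne_zero⟩
  have hb : 0 < T.toReal := ENNReal.toReal_pos hT₀.ne' hT
  have hIoo : Ioo 0 T.toReal ⊆ domainUpTo T :=
    (domainUpTo_of_ne_top hT).symm ▸ Ioo_subset_Ico_self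
  obtain ⟨L, hL⟩ : ∃ L, Tendsto α (𝓝[<] T.toReal) (𝓝 L) := by
    rcases hsol.monotoneOn_or_antitoneOn hα0 hr hr3 with ⟨hmono, hle⟩ | ⟨hanti, hge⟩
    · exact ⟨_, (hmono.mono hIoo).tendsto_nhdsWithin_Ioo_left (nonempty_Ioo.2 hb)
        ⟨r, forall_mem_image.2 fun t ht => hle t (hIoo ht)⟩⟩
    · exact ⟨_, (hanti.mono hIoo).tendsto_nhdsWithin_Ioo_left (nonempty_Ioo.2 hb)
        ⟨r, forall_mem_image.2 fun t ht => hge t (hIoo ht)⟩⟩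
  have hLpos : 0 < L := (lt_min hα0 hr).trans_le <| ge_of_tendsto hL <|
    eventually_of_mem (Ioo_mem_nhdsLT hb) fun t ht => hsol.min_le_fst hα0 hr hr3 (hIoo ht)
  refine ⟨(L, √(v / L)), hLpos, sqrt_pos.2 (div_pos hv hLpos), hL.prodMk_nhds ?_⟩
  exact ((continuous_sqrt.tendsto _).comp (tendsto_const_nhds.div hL hLpos.ne')).congr'
    (eventually_of_mem (Ioo_mem_nhdsLT hb) fun t ht => (hsol.snd_eq_sqrt hβ0 (hIoo ht)).symm)

theorem tendsto_atTop (hsol : IsSolutionOn α β (domainUpTo ⊤)) (hα0 : 0 < α 0) (hβ0 : 0 < β 0)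
    {r : ℝ} (hr : 0 < r) (hr3 : r ^ 3 = α 0 * β 0 ^ 2) :
    Tendsto α atTop (𝓝 r) ∧ Tendsto β atTop (𝓝 r) := by
  set v := α 0 * β 0 ^ 2
  have hv : 0 < v := by positivity
  have hdom : ∀ t ∈ Ici (0 : ℝ), t ∈ domainUpTo ⊤ := fun t ht => domainUpTo_top.symm ▸ ht
  set m := min (α 0) r
  have hrate : ∀ t ∈ Ici (0 : ℝ), m / (2 * v) ≤ relaxationRate v (α t) := fun t ht =>
    (div_le_div_of_nonneg_right (hsol.min_le_fst hα0 hr hr3 (hdom t ht)) (by positivity)).trans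
      (div_le_relaxationRate hv (hsol.fst_pos hα0 (hdom t ht)))
  have hsq : Tendsto (fun t => (α t ^ 3 - v) ^ 2) atTop (𝓝 0) := by
    refine tendsto_zero_of_hasDerivAt_le_neg_mul (div_pos (lt_min hα0 hr) hv)
      (fun t ht => (hsol.hasDerivAt_cube_sub (hdom t ht)).fun_pow 2) (fun t ht => ?_)
      (fun t _ => sq_nonneg _)
    have hmv : m / v = 2 * (m / (2 * v)) := by field_simp
    push_cast
    nlinarith [mul_le_mul_of_nonneg_right (hrate t ht) (sq_nonneg (α t ^ 3 - v))]
  have hcube : Tendsto (fun t => α t ^ 3) atTop (𝓝 (r ^ 3)) := by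
    have habs : Tendsto (fun t => |α t ^ 3 - v|) atTop (𝓝 0) := by
      simpa [Function.comp_def, sqrt_sq_eq_abs] using (continuous_sqrt.tendsto 0).comp hsq
    rw [hr3]
    simpa using (tendsto_zero_iff_norm_tendsto_zero.2 habs).add_const v
  have hα : Tendsto α atTop (𝓝 r) := by
    have hroot := ((continuousAt_rpow_const (r ^ 3) ((3 : ℕ)⁻¹ : ℝ)
      (Or.inl (by positivity))).tendsto.comp hcube)
    rw [pow_rpow_inv_natCast hr.le three_ne_zero] at hroot
    exact hroot.congr' (eventually_atTop.2 ⟨0, fun t ht =>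
      pow_rpow_inv_natCast (hsol.fst_pos hα0 (hdom t ht)).le three_ne_zero⟩)
  have hsqrt : √(v / r) = r := by
    rw [← hr3, show r ^ 3 / r = r ^ 2 by field_simp, sqrt_sq hr.le]
  refine ⟨hα, ?_⟩
  exact (hsqrt ▸ (continuous_sqrt.tendsto _).comp (tendsto_const_nhds.div hα hr.ne')).congr'
    (eventually_atTop.2 ⟨0, fun t ht => (hsol.snd_eq_sqrt hβ0 (hdom t ht)).symm⟩)

end IsSolutionOn

theorem IsMaxSolution.eq_top {α β : ℝ → ℝ} {T : ℝ≥0∞} (hmax : IsMaxSolution α β T)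
    (hα0 : 0 < α 0) (hβ0 : 0 < β 0) : T = ⊤ := by
  obtain ⟨hT₀, hsol, hmaximal⟩ := hmax
  by_contra hT
  have hdom := domainUpTo_of_ne_top hT
  obtain ⟨p, hp₁, hp₂, hlim⟩ := hsol.exists_tendsto_nhdsLT hT₀ hT hα0 hβ0
  have hquadrant : {q : ℝ × ℝ | 0 < q.1 ∧ 0 < q.2} ∈ 𝓝 p :=
    ((isOpen_lt continuous_const continuous_fst).inter
      (isOpen_lt continuous_const continuous_snd)).mem_nhds ⟨hp₁, hp₂⟩
  obtain ⟨c, hc, g, hgf, hg⟩ := exists_hasDerivAt_extension_of_tendsto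
    (ENNReal.toReal_pos hT₀.ne' hT) (contDiffAt_uncurry_G2 hp₁.ne' hp₂.ne') hquadrant
    (fun t ht => ((isSolutionOn_iff_hasDerivAt.1 hsol) t
      (hdom ▸ Ioo_subset_Ico_self ht)).2.2) hlim
  refine hmaximal ⟨ENNReal.ofReal c, fun t => (g t).1, fun t => (g t).2, ?_, ?_, ?_⟩
  · rwa [← ENNReal.ofReal_toReal hT,
      ENNReal.ofReal_lt_ofReal_iff (hc.trans_le' ENNReal.toReal_nonneg)]
  · rw [isSolutionOn_iff_hasDerivAt, domainUpTo_of_ne_top ENNReal.ofReal_ne_top,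
      ENNReal.toReal_ofReal (hc.le.trans' ENNReal.toReal_nonneg)]
    intro t ht
    rcases lt_or_ge t T.toReal with htT | htT
    · obtain ⟨hα, hβ, hd⟩ := (isSolutionOn_iff_hasDerivAt.1 hsol) t (hdom ▸ ⟨ht.1, htT⟩)
      rw [hgf t htT]
      exact ⟨hα, hβ, hd.congr_of_eventuallyEq (eventually_of_mem (Iio_mem_nhds htT) hgf)⟩
    · obtain ⟨hd, hg₁, hg₂⟩ := hg t ⟨htT, ht.2⟩
      exact ⟨hg₁.ne', hg₂.ne', hd⟩
  · intro t ht
    rw [hdom] at ht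
    simp [hgf t ht.2]

/-- Stability (case `aμ = -1`, any `ε > 0`): the maximal solution starting at the
volume-normalized Berger metric, `α(0) = √(c(ε))·ε`, `β(0) = √(c(ε))` with
`c(ε) = (2π²ε)^(-2/3)`, exists for all time and converges to the volume-normalized
round metric: `α(t), β(t) → (2π²)^(-1/3)`. -/
theorem stability_amu_neg_one (ε : ℝ) (hε : 0 < ε) (α β : ℝ → ℝ) (T : ℝ≥0∞)
    (hmax : IsMaxSolution α β T)
    (hα0 : α 0 = Real.sqrt ((2 * π^2 * ε) ^ (-(2:ℝ)/3)) * ε)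
    (hβ0 : β 0 = Real.sqrt ((2 * π^2 * ε) ^ (-(2:ℝ)/3))) :
    T = ⊤ ∧ Tendsto α atTop (𝓝 ((2 * π^2) ^ (-(1:ℝ)/3))) ∧
      Tendsto β atTop (𝓝 ((2 * π^2) ^ (-(1:ℝ)/3))) := by
  have hX : 0 < 2 * π ^ 2 * ε := by positivity
  have hcube : ∀ {x : ℝ}, 0 < x → (x ^ (-(1:ℝ)/3)) ^ 3 = x⁻¹ := fun hx => by
    rw [← rpow_natCast, ← rpow_mul hx.le]
    norm_num [rpow_neg_one]
  have hsqrt : √((2 * π ^ 2 * ε) ^ (-(2:ℝ)/3)) = (2 * π ^ 2 * ε) ^ (-(1:ℝ)/3) := by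
    rw [sqrt_eq_rpow, ← rpow_mul hX.le]
    norm_num
  rw [hsqrt] at hα0 hβ0
  have hα0' : 0 < α 0 := hα0 ▸ by positivity
  have hβ0' : 0 < β 0 := hβ0 ▸ by positivity
  have hr3 : ((2 * π ^ 2) ^ (-(1:ℝ)/3)) ^ 3 = α 0 * β 0 ^ 2 := by
    rw [hcube (by positivity), hα0, hβ0,
      show ∀ u : ℝ, u * ε * u ^ 2 = u ^ 3 * ε by intro u; ring, hcube hX]
    field_simp
  obtain rfl := hmax.eq_top hα0' hβ0'
  exact ⟨rfl, hmax.2.1.tendsto_atTop hα0' hβ0' (by positivity) hr3⟩
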